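/- Let X ⊆ B_d, fix an integer k ≥ 1 and reals β, B, β̂, B̂ ≥ 0. Suppose F* ⊆ B_d with |F*| = k satisfies sup_{x∈X} κ(x, F*) ≤ β·OPT + B, and let S ⊆ X be a finite set such that for every f ∈ F* there exists x_f ∈ S whose nearest point in F* is f. Suppose F̂ ⊆ B_d satisfies max_{x∈S} κ(x, F̂) ≤ β̂·ÔPT + B̂, where ÔPT := inf over F ⊆ B_d with |F| = k of max_{x∈S} κ(x, F). Then for every x ∈ X, κ(x, F̂) ≤ (2β + β̂)·OPT + 2B + B̂. -/

import Mathlib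

/-!
Let `f` be the center of `F*` nearest to `x`, and let `s ∈ S` be a sample point whose nearest
center in `F*` is also `f`. Then `κ(x, s) ≤ κ(x, F*) + κ(s, F*) ≤ 2 (β·OPT + B)`, and
`κ(s, F̂) ≤ β̂·ÔPT + B̂ ≤ β̂·OPT + B̂` since shrinking the domain from `X` to `S ⊆ X` can only
lower the optimal cost. The triangle inequality `κ(x, F̂) ≤ κ(x, s) + κ(s, F̂)` concludes.
-/

/-- `κ(x, F) = min_{f ∈ F} N (x - f)`. -/
noncomputable def setDist {d : ℕ} (N : Seminorm ℝ (Fin d → ℝ))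
    (x : Fin d → ℝ) (F : Finset (Fin d → ℝ)) : ℝ :=
  sInf {r | ∃ f ∈ F, r = N (x - f)}

/-- `B_d`: the `κ`-ball of diameter 1 centered at the origin. -/
def ballD {d : ℕ} (N : Seminorm ℝ (Fin d → ℝ)) : Set (Fin d → ℝ) := {x | N x ≤ 1 / 2}

/-- The statistical `k`-centers cost of `F` over the domain `Y`: `sup_{x ∈ Y} κ(x, F)`. -/
noncomputable def kcCost {d : ℕ} (N : Seminorm ℝ (Fin d → ℝ))
    (Y : Set (Fin d → ℝ)) (F : Finset (Fin d → ℝ)) : ℝ :=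
  sSup {t | ∃ x ∈ Y, t = setDist N x F}

/-- The optimal statistical `k`-centers cost over the domain `Y`, with centers in `B_d`. -/
noncomputable def kcOPT {d : ℕ} (N : Seminorm ℝ (Fin d → ℝ))
    (k : ℕ) (Y : Set (Fin d → ℝ)) : ℝ :=
  sInf {r | ∃ F : Finset (Fin d → ℝ), ↑F ⊆ ballD N ∧ F.card = k ∧ r = kcCost N Y F}

variable {d : ℕ} (N : Seminorm ℝ (Fin d → ℝ))

lemma setDist_nonneg (x : Fin d → ℝ) (F : Finset (Fin d → ℝ)) : 0 ≤ setDist N x F :=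
  Real.sInf_nonneg <| by rintro r ⟨f, -, rfl⟩; exact apply_nonneg N _

lemma setDist_le_of_mem (x : Fin d → ℝ) {F : Finset (Fin d → ℝ)} {f : Fin d → ℝ}
    (hf : f ∈ F) : setDist N x F ≤ N (x - f) :=
  csInf_le ⟨0, by rintro r ⟨g, -, rfl⟩; exact apply_nonneg N _⟩ ⟨f, hf, rfl⟩

lemma le_setDist {x : Fin d → ℝ} {F : Finset (Fin d → ℝ)} (hF : F.Nonempty) {r : ℝ}
    (h : ∀ f ∈ F, r ≤ N (x - f)) : r ≤ setDist N x F := by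
  obtain ⟨f, hf⟩ := hF
  exact le_csInf ⟨_, f, hf, rfl⟩ (by rintro _ ⟨g, hg, rfl⟩; exact h g hg)

lemma exists_setDist_eq (x : Fin d → ℝ) {F : Finset (Fin d → ℝ)} (hF : F.Nonempty) :
    ∃ f ∈ F, setDist N x F = N (x - f) := by
  obtain ⟨f, hf, hmin⟩ := F.exists_min_image (fun f => N (x - f)) hF
  exact ⟨f, hf, le_antisymm (setDist_le_of_mem N x hf) (le_setDist N hF hmin)⟩

lemma setDist_le_add (x y : Fin d → ℝ) (F : Finset (Fin d → ℝ)) :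
    setDist N x F ≤ N (x - y) + setDist N y F := by
  rcases F.eq_empty_or_nonempty with rfl | hF
  · simp [setDist]
  obtain ⟨f, hf, hyf⟩ := exists_setDist_eq N y hF
  calc setDist N x F ≤ N (x - f) := setDist_le_of_mem N x hf
    _ ≤ N (x - y) + N (y - f) := by simpa using map_add_le_add N (x - y) (y - f)
    _ = N (x - y) + setDist N y F := by rw [hyf]

lemma setDist_le_one {x : Fin d → ℝ} (hx : x ∈ ballD N) {F : Finset (Fin d → ℝ)}
    (hF : ↑F ⊆ ballD N) : setDist N x F ≤ 1 := by
  rcases F.eq_empty_or_nonempty with rfl | ⟨f, hf⟩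
  · simp [setDist]
  calc setDist N x F ≤ N (x - f) := setDist_le_of_mem N x hf
    _ ≤ N x + N f := map_sub_le_add N x f
    _ ≤ 1 := by linarith [show N x ≤ 1 / 2 from hx, show N f ≤ 1 / 2 from hF hf]

lemma kcCost_mono {S Y : Set (Fin d → ℝ)} (hSY : S ⊆ Y) (hY : Y ⊆ ballD N)
    {F : Finset (Fin d → ℝ)} (hF : ↑F ⊆ ballD N) : kcCost N S F ≤ kcCost N Y F := by
  rcases S.eq_empty_or_nonempty with rfl | ⟨s, hs⟩
  · simpa [kcCost] using Real.sSup_nonneg (by rintro _ ⟨y, -, rfl⟩; exact setDist_nonneg N y F)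
  refine csSup_le_csSup ⟨1, ?_⟩ ⟨_, s, hs, rfl⟩ ?_
  · rintro _ ⟨y, hy, rfl⟩
    exact setDist_le_one N (hY hy) hF
  · rintro _ ⟨y, hy, rfl⟩
    exact ⟨y, hSY hy, rfl⟩

lemma kcOPT_mono (k : ℕ) {S Y : Set (Fin d → ℝ)} (hSY : S ⊆ Y) (hY : Y ⊆ ballD N) :
    kcOPT N k S ≤ kcOPT N k Y := by
  by_cases hfeas : ∃ F : Finset (Fin d → ℝ), ↑F ⊆ ballD N ∧ F.card = k
  · obtain ⟨F₀, hF₀, hF₀k⟩ := hfeas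
    refine le_csInf ⟨_, F₀, hF₀, hF₀k, rfl⟩ ?_
    rintro _ ⟨F, hF, hFk, rfl⟩
    have hbdd : BddBelow {r | ∃ G : Finset (Fin d → ℝ), ↑G ⊆ ballD N ∧ G.card = k ∧
        r = kcCost N S G} := by
      refine ⟨0, ?_⟩
      rintro _ ⟨G, -, -, rfl⟩
      exact Real.sSup_nonneg (by rintro _ ⟨y, -, rfl⟩; exact setDist_nonneg N y G)
    exact (csInf_le hbdd ⟨F, hF, hFk, rfl⟩).trans (kcCost_mono N hSY hY hF)
  · push Not at hfeas
    have hempty : ∀ Z : Set (Fin d → ℝ), kcOPT N k Z = 0 := fun Z => by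
      rw [kcOPT, ← Real.sInf_empty]
      congr 1
      ext r
      simpa using fun F hF hFk => absurd hFk (hfeas F hF)
    rw [hempty, hempty]

lemma exists_mem_sample_le_setDist_add {Fstar S : Finset (Fin d → ℝ)} (hFstar : Fstar.Nonempty)
    (hScover : ∀ f ∈ Fstar, ∃ x ∈ S, ∀ f' ∈ Fstar, N (x - f) ≤ N (x - f'))
    (x : Fin d → ℝ) : ∃ s ∈ S, N (x - s) ≤ setDist N x Fstar + setDist N s Fstar := by
  obtain ⟨f, hf, hxf⟩ := exists_setDist_eq N x hFstar
  obtain ⟨s, hs, hsf⟩ := hScover f hf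
  refine ⟨s, hs, ?_⟩
  calc N (x - s) ≤ N (x - f) + N (s - f) := by
        simpa [map_sub_rev N f s] using map_add_le_add N (x - f) (f - s)
    _ ≤ setDist N x Fstar + setDist N s Fstar :=
        add_le_add hxf.ge (le_setDist N hFstar hsf)

theorem k_centers_oracle_on_sample_general {d k : ℕ} (hk : 1 ≤ k)
    (N : Seminorm ℝ (Fin d → ℝ))
    (X : Set (Fin d → ℝ)) (hX : X ⊆ ballD N)
    (β B βh Bh : ℝ) (hβh : 0 ≤ βh)
    (Fstar : Finset (Fin d → ℝ)) (hFstarCard : Fstar.card = k)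
    (hFstarApx : ∀ x ∈ X, setDist N x Fstar ≤ β * kcOPT N k X + B)
    (S : Finset (Fin d → ℝ)) (hS : ↑S ⊆ X)
    (hScover : ∀ f ∈ Fstar, ∃ x ∈ S, ∀ f' ∈ Fstar, (N (x - f) : ℝ) ≤ N (x - f'))
    (Fhat : Finset (Fin d → ℝ))
    (hFhatApx : ∀ x ∈ S, setDist N x Fhat
      ≤ βh * sInf {r | ∃ F : Finset (Fin d → ℝ), ↑F ⊆ ballD N ∧ F.card = k ∧
            r = sSup {t | ∃ x ∈ (S : Set (Fin d → ℝ)), t = setDist N x F}} + Bh) :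
    ∀ x ∈ X, setDist N x Fhat ≤ (2 * β + βh) * kcOPT N k X + 2 * B + Bh := by
  intro x hx
  have hFstar : Fstar.Nonempty := Finset.card_pos.mp (by omega)
  obtain ⟨s, hs, hxs⟩ := exists_mem_sample_le_setDist_add N hFstar hScover x
  -- the `sInf` in `hFhatApx` is `kcOPT N k S` unfolded
  have hsHat : setDist N s Fhat ≤ βh * kcOPT N k S + Bh := hFhatApx s hs
  have hOPT : βh * kcOPT N k S ≤ βh * kcOPT N k X :=
    mul_le_mul_of_nonneg_left (kcOPT_mono N k hS hX) hβh
  calc setDist N x Fhat ≤ N (x - s) + setDist N s Fhat := setDist_le_add N x s Fhat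
    _ ≤ (2 * β + βh) * kcOPT N k X + 2 * B + Bh := by
        linarith [hFstarApx x hx, hFstarApx s (hS hs)]

/-- `k`-centers oracle on a sample: if `F*` is a `(β,B)`-approximate solution, the sample
`S` contains a point from each cluster of `F*`, and `F̂` is a `(β̂,B̂)`-approximate solution
of the combinatorial `k`-centers problem on `S`, then `F̂` is a
`(2β+β̂, 2B+B̂)`-approximate solution for the statistical problem. -/
theorem k_centers_oracle_on_sample {d k : ℕ} (hk : 1 ≤ k)
    (N : Seminorm ℝ (Fin d → ℝ)) (hNdef : ∀ x, N x = 0 → x = 0)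
    (X : Set (Fin d → ℝ)) (hX : X ⊆ ballD N)
    (β B βh Bh : ℝ) (hβ : 0 ≤ β) (hB : 0 ≤ B) (hβh : 0 ≤ βh) (hBh : 0 ≤ Bh)
    (Fstar : Finset (Fin d → ℝ)) (hFstarSub : ↑Fstar ⊆ ballD N) (hFstarCard : Fstar.card = k)
    (hFstarApx : ∀ x ∈ X, setDist N x Fstar ≤ β * kcOPT N k X + B)
    (S : Finset (Fin d → ℝ)) (hS : ↑S ⊆ X)
    (hScover : ∀ f ∈ Fstar, ∃ x ∈ S, ∀ f' ∈ Fstar, (N (x - f) : ℝ) ≤ N (x - f'))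
    (Fhat : Finset (Fin d → ℝ)) (hFhatSub : ↑Fhat ⊆ ballD N)
    (hFhatApx : ∀ x ∈ S, setDist N x Fhat
      ≤ βh * sInf {r | ∃ F : Finset (Fin d → ℝ), ↑F ⊆ ballD N ∧ F.card = k ∧
            r = sSup {t | ∃ x ∈ (S : Set (Fin d → ℝ)), t = setDist N x F}} + Bh) :
    ∀ x ∈ X, setDist N x Fhat ≤ (2 * β + βh) * kcOPT N k X + 2 * B + Bh :=
  k_centers_oracle_on_sample_general hk N X hX β B βh Bh hβh Fstar hFstarCard hFstarApx S hS hScover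
    Fhat hFhatApx
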